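/- arXiv:0912.4952 — 6 statements merged into one kernel-verified Lean document; each statement's English description precedes it below -/
import Mathlib

section
/- Let L > 0 and let r : [0,L] → ℝ be continuous. Define the kernel K on [0,L]² by K(x,y) = y/L − 1 if x < y and K(x,y) = y/L if y < x, and set E(x) := ∫₀^L K(x,y) r(y) dy. Then E is differentiable on (0,L) with E'(x) = r(x) for all x ∈ (0,L), and ∫₀^L E(x) dx = 0. If moreover ∫₀^L r(y) dy = 0, then E(0) = E(L). -/
open MeasureTheory

private lemma green_key (L : ℝ) (hL : 0 < L) (r : ℝ → ℝ)
    (hint : IntervalIntegrable r volume 0 L) {x : ℝ} (hx : x ∈ Set.Icc 0 L) :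
    (∫ y in (0:ℝ)..L, (if x < y then y / L - 1 else y / L) * r y)
      = (∫ y in (0:ℝ)..L, y / L * r y) - ∫ y in x..L, r y := by
  have hfun : ∀ y, (if x < y then y / L - 1 else y / L) * r y
      = y / L * r y - Set.indicator (Set.Ioi x) r y := by
    intro y
    by_cases h : x < y
    · simp [h, Set.indicator_of_mem (Set.mem_Ioi.mpr h)]; ring
    · simp [h, Set.indicator_apply, Set.mem_Ioi]
  have hC : IntervalIntegrable (fun y => y / L * r y) volume 0 L :=
    hint.continuousOn_mul (by fun_prop)
  have hind : IntervalIntegrable (Set.indicator (Set.Ioi x) r) volume 0 L := by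
    constructor
    · exact (hint.1).indicator measurableSet_Ioi
    · exact (hint.2).indicator measurableSet_Ioi
  have hIndInt : (∫ y in (0:ℝ)..L, Set.indicator (Set.Ioi x) r y) = ∫ y in x..L, r y := by
    rw [intervalIntegral.integral_of_le hL.le, intervalIntegral.integral_of_le hx.2,
      setIntegral_indicator measurableSet_Ioi, Set.Ioc_inter_Ioi,
      sup_eq_right.mpr hx.1]
  calc (∫ y in (0:ℝ)..L, (if x < y then y / L - 1 else y / L) * r y)
      = ∫ y in (0:ℝ)..L, (y / L * r y - Set.indicator (Set.Ioi x) r y) :=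
        intervalIntegral.integral_congr fun y _ => hfun y
    _ = (∫ y in (0:ℝ)..L, y / L * r y) - ∫ y in (0:ℝ)..L, Set.indicator (Set.Ioi x) r y :=
        intervalIntegral.integral_sub hC hind
    _ = _ := by rw [hIndInt]

/-- Properties of the electric field `E(x) = ∫₀^L K(x,y) r(y) dy` given by the
Green's-function kernel `K(x,y) = y/L − 1` for `x < y` and `K(x,y) = y/L` for `y < x`:
`E' = r` on `(0,L)`, `E` has zero mean, and `E(0) = E(L)` when `r` has zero mean. -/
theorem green_kernel_field
    (L : ℝ) (hL : 0 < L) (r : ℝ → ℝ) (hr : ContinuousOn r (Set.Icc 0 L))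
    (E : ℝ → ℝ)
    (hE : ∀ x, E x = ∫ y in (0:ℝ)..L, (if x < y then y / L - 1 else y / L) * r y) :
    (∀ x ∈ Set.Ioo (0:ℝ) L, HasDerivAt E (r x) x) ∧
    (∫ x in (0:ℝ)..L, E x) = 0 ∧
    ((∫ y in (0:ℝ)..L, r y) = 0 → E 0 = E L) := by
  have huIcc : Set.uIcc (0:ℝ) L = Set.Icc 0 L := Set.uIcc_of_le hL.le
  have hint : IntervalIntegrable r volume 0 L := by
    apply ContinuousOn.intervalIntegrable; rwa [huIcc]
  set C : ℝ := ∫ y in (0:ℝ)..L, y / L * r y with hC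
  set I : ℝ := ∫ y in (0:ℝ)..L, r y with hI
  set G : ℝ → ℝ := fun x => ∫ y in (0:ℝ)..x, r y with hG
  have hsub : ∀ x ∈ Set.Icc (0:ℝ) L, E x = C - (I - G x) := by
    intro x hx
    rw [hE x, green_key L hL r hint hx]
    congr 1
    rw [hI, hG]
    exact (intervalIntegral.integral_interval_sub_left hint
      (hint.mono_set (by rw [huIcc, Set.uIcc_of_le hx.1]; exact Set.Icc_subset_Icc_right hx.2))).symm
  have hGderiv : ∀ x ∈ Set.Ioo (0:ℝ) L, HasDerivAt G (r x) x := by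
    intro x hx
    have hcont : ContinuousAt r x := hr.continuousAt (Icc_mem_nhds hx.1 hx.2)
    exact intervalIntegral.integral_hasDerivAt_right
      (hint.mono_set (by rw [huIcc, Set.uIcc_of_le hx.1.le]; exact Set.Icc_subset_Icc_right hx.2.le))
      ⟨Set.Icc 0 L, Icc_mem_nhds hx.1 hx.2, hr.aestronglyMeasurable measurableSet_Icc⟩ hcont
  have hGcont : ContinuousOn G (Set.uIcc 0 L) :=
    intervalIntegral.continuousOn_primitive_interval' hint Set.left_mem_uIcc
  refine ⟨?_, ?_, ?_⟩
  · intro x hx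
    have hEq : E =ᶠ[nhds x] fun t => C - (I - G t) := by
      filter_upwards [Icc_mem_nhds hx.1 hx.2] with t ht using hsub t ht
    have : HasDerivAt (fun t => C - (I - G t)) (r x) x := by
      simpa using ((hGderiv x hx).const_sub I).const_sub C
    exact this.congr_of_eventuallyEq hEq
  · -- zero mean
    have h1 : (∫ x in (0:ℝ)..L, E x) = ∫ x in (0:ℝ)..L, ((C - I) + G x) := by
      apply intervalIntegral.integral_congr
      intro x hx
      rw [huIcc] at hx
      rw [hsub x hx]; ring
    have hGint : IntervalIntegrable G volume 0 L := hGcont.intervalIntegrable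
    have h2 : (∫ x in (0:ℝ)..L, ((C - I) + G x))
        = (C - I) * L + ∫ x in (0:ℝ)..L, G x := by
      rw [intervalIntegral.integral_add (intervalIntegrable_const) hGint,
        intervalIntegral.integral_const]
      simp [smul_eq_mul, mul_comm]
    have hparts := intervalIntegral.integral_mul_deriv_eq_deriv_mul_of_hasDerivAt
      (u := G) (v := id) (u' := r) (v' := fun _ => (1:ℝ))
      hGcont (continuous_id.continuousOn)
      (by rw [min_eq_left hL.le, max_eq_right hL.le]; exact hGderiv)
      (fun x _ => hasDerivAt_id x) hint (intervalIntegrable_const)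
    simp only [id_eq, mul_one] at hparts
    have hG0 : G 0 = 0 := intervalIntegral.integral_same
    have hGL : G L = I := rfl
    have hCL : C * L = ∫ x in (0:ℝ)..L, r x * x := by
      rw [hC, ← intervalIntegral.integral_mul_const]
      apply intervalIntegral.integral_congr
      intro y _
      field_simp
    rw [h1, h2, hparts, hG0, hGL]
    ring_nf
    ring_nf at hCL
    linarith [hCL]
  · intro h0
    rw [hsub 0 (Set.left_mem_Icc.mpr hL.le), hsub L (Set.right_mem_Icc.mpr hL.le)]
    have hG0 : G 0 = 0 := intervalIntegral.integral_same
    have hGL : G L = I := rfl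
    rw [hG0, hGL, h0]
end

section
/- Let L > 0, T > 0, R > 0. Suppose f : [0,T]×ℝ×ℝ → ℝ is C¹, L-periodic in x, with v ↦ f(t,x,v) supported in [−R,R] for all (t,x), E : [0,T]×ℝ → ℝ is C² and L-periodic in x, f satisfies ∂_t f + v ∂_x f + E(t,x) ∂_v f = 0, and for all t: ∂_x E(t,x) = ρ(t,x) := ∫_ℝ f(t,x,v) dv − 1 and ∫₀^L E(t,x) dx = 0. Set J(t,x) := ∫_ℝ v f(t,x,v) dv and J̄(t) := (1/L)∫₀^L J(t,x) dx. Let (X,V) : [0,T] → ℝ² be C¹ with X'(t) = V(t) and V'(t) = E(t,X(t)). Then for all t ∈ (0,T): d/dt [E(t,X(t))] = −J(t,X(t)) + J̄(t) + V(t) ρ(t,X(t)). -/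
open MeasureTheory Set Filter Function Metric

/-!
Along a characteristic, `d/dt E(t, X) = ∂ₜE + V ∂ₓE` with `∂ₓE = ρ` by the Poisson equation, so
the point is `∂ₜE = J̄ - J`. Integrating the Vlasov equation in `v` (the `∂ᵥf` term integrates to
zero by compact support) gives the continuity equation `∂ₜρ + ∂ₓJ = 0`. As `∂ₓ∂ₜE = ∂ₜ∂ₓE = ∂ₜρ`,
the function `x ↦ ∂ₜE + J` is constant; its mean over `[0, L]` is `J̄`, because `∂ₜE` has mean
zero, being the time derivative of `∫₀ᴸ E = 0`.
-/

section TwoVariables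

variable {E : Type*} [NormedAddCommGroup E] [NormedSpace ℝ E] {G : ℝ → ℝ → E}

theorem hasDerivAt_left_of_differentiable (hG : Differentiable ℝ (uncurry G)) (s x : ℝ) :
    HasDerivAt (G · x) (fderiv ℝ (uncurry G) (s, x) (1, 0)) s :=
  (hG (s, x)).hasFDerivAt.comp_hasDerivAt (l := uncurry G) s
    ((hasDerivAt_id' s).prodMk (hasDerivAt_const s x))

theorem hasDerivAt_right_of_differentiable (hG : Differentiable ℝ (uncurry G)) (s x : ℝ) :
    HasDerivAt (G s) (fderiv ℝ (uncurry G) (s, x) (0, 1)) x :=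
  (hG (s, x)).hasFDerivAt.comp_hasDerivAt (l := uncurry G) x
    ((hasDerivAt_const x s).prodMk (hasDerivAt_id' x))

theorem ContDiff.continuous_uncurry_deriv_left (hG : ContDiff ℝ 1 (uncurry G)) :
    Continuous (uncurry fun s x => deriv (G · x) s) := by
  have hderiv : (uncurry fun s x => deriv (G · x) s) = fun p => fderiv ℝ (uncurry G) p (1, 0) :=
    funext fun p =>
      (hasDerivAt_left_of_differentiable (hG.differentiable one_ne_zero) p.1 p.2).deriv
  rw [hderiv]
  exact (hG.continuous_fderiv one_ne_zero).clm_apply continuous_const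

theorem hasDerivAt_uncurry_comp {X : ℝ → ℝ} {V t : ℝ} (hG : Differentiable ℝ (uncurry G))
    (hX : HasDerivAt X V t) :
    HasDerivAt (fun s => G s (X s)) (deriv (G · (X t)) t + V • deriv (G t) (X t)) t := by
  have hchain := (hG (t, X t)).hasFDerivAt.comp_hasDerivAt (l := uncurry G) t
    ((hasDerivAt_id' t).prodMk hX)
  have hsplit : ((1 : ℝ), V) = (1, 0) + V • (0, 1) := by simp
  rwa [hsplit, map_add, map_smul, ← (hasDerivAt_left_of_differentiable hG t (X t)).deriv,
    ← (hasDerivAt_right_of_differentiable hG t (X t)).deriv] at hchain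

theorem ContDiff.hasDerivAt_deriv_left_of_hasDerivAt_deriv_right (hG : ContDiff ℝ 2 (uncurry G))
    {t x : ℝ} {r : E} (h : HasDerivAt (fun s => deriv (G s) x) r t) :
    HasDerivAt (fun y => deriv (G · y) t) r x := by
  set DG := fderiv ℝ (uncurry G)
  have hG1 : Differentiable ℝ (uncurry G) := hG.differentiable two_ne_zero
  have hD2 : HasFDerivAt DG (fderiv ℝ DG (t, x)) (t, x) :=
    ((hG.fderiv_right le_rfl).differentiable one_ne_zero (t, x)).hasFDerivAt
  have hleft : HasDerivAt (fun y => DG (t, y) (1, 0)) (fderiv ℝ DG (t, x) (0, 1) (1, 0)) x := by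
    simpa only [map_zero, add_zero, comp_apply] using ((hD2.comp_hasDerivAt (l := DG) x
      ((hasDerivAt_const x t).prodMk (hasDerivAt_id' x))).clm_apply
      (hasDerivAt_const x ((1 : ℝ), (0 : ℝ))))
  have hright : HasDerivAt (fun s => DG (s, x) (0, 1)) (fderiv ℝ DG (t, x) (1, 0) (0, 1)) t := by
    simpa only [map_zero, add_zero, comp_apply] using ((hD2.comp_hasDerivAt (l := DG) t
      ((hasDerivAt_id' t).prodMk (hasDerivAt_const t x))).clm_apply
      (hasDerivAt_const t ((0 : ℝ), (1 : ℝ))))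
  have hsymm := hG.contDiffAt.isSymmSndFDerivAt (x := (t, x)) (by simp) (0, 1) (1, 0)
  have hr : r = fderiv ℝ DG (t, x) (1, 0) (0, 1) := by
    refine h.unique (hright.congr_of_eventuallyEq (.of_forall fun s => ?_))
    exact (hasDerivAt_right_of_differentiable hG1 s x).deriv
  rw [hr, ← hsymm]
  exact hleft.congr_of_eventuallyEq
    (.of_forall fun y => (hasDerivAt_left_of_differentiable hG1 t y).deriv)

end TwoVariables

section ParametricIntegral

variable {α E : Type*} [TopologicalSpace α] [T2Space α] [SecondCountableTopology α]
  [MeasurableSpace α] [OpensMeasurableSpace α] [NormedAddCommGroup E] [NormedSpace ℝ E]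

theorem hasDerivAt_integral_of_continuous_of_isCompact {μ : Measure α}
    [IsFiniteMeasureOnCompacts μ] {F F' : ℝ → α → E} {K : Set α} (hK : IsCompact K)
    (hF : Continuous (uncurry F)) (hF' : Continuous (uncurry F'))
    (hFK : ∀ᵐ a ∂μ, a ∉ K → ∀ s, F s a = 0)
    (hd : ∀ s a, HasDerivAt (F · a) (F' s a) s) (t : ℝ) :
    HasDerivAt (fun s => ∫ a, F s a ∂μ) (∫ a, F' t a ∂μ) t := by
  have hF'K : ∀ᵐ a ∂μ, a ∉ K → ∀ s, F' s a = 0 := hFK.mono fun a ha haK s =>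
    (hd s a).unique (by simpa [ha haK] using hasDerivAt_const s (0 : E))
  obtain ⟨C, hC⟩ := ((isCompact_closedBall t 1).prod hK).exists_bound_of_continuousOn
    hF'.continuousOn
  have h_bound : ∀ᵐ a ∂μ, ∀ s ∈ ball t 1, ‖F' s a‖ ≤ K.indicator (fun _ => C) a := by
    filter_upwards [hF'K] with a ha s hs
    by_cases haK : a ∈ K
    · rw [indicator_of_mem haK]
      exact hC (s, a) ⟨ball_subset_closedBall hs, haK⟩
    · simp [ha haK, indicator_of_notMem haK]
  have hFt_int : Integrable (F t) μ :=
    ((hF.comp (Continuous.prodMk_right t)).continuousOn.integrableOn_compact hK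
      ).integrable_of_ae_notMem_eq_zero (hFK.mono fun a ha haK => ha haK t)
  exact (hasDerivAt_integral_of_dominated_loc_of_deriv_le (ball_mem_nhds t one_pos)
    (.of_forall fun s => (hF.comp (Continuous.prodMk_right s)).aestronglyMeasurable) hFt_int
    (hF'.comp (Continuous.prodMk_right t)).aestronglyMeasurable h_bound
    ((integrable_indicator_iff hK.measurableSet).2 (integrableOn_const hK.measure_lt_top.ne))
    (.of_forall fun a s _ => hd s a)).2

theorem hasDerivAt_integral_of_contDiff {μ : Measure ℝ} [IsFiniteMeasureOnCompacts μ]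
    {G : ℝ → ℝ → E} {K : Set ℝ} (hG : ContDiff ℝ 1 (uncurry G)) (hK : IsCompact K)
    (hGK : ∀ᵐ x ∂μ, x ∉ K → ∀ s, G s x = 0) (t : ℝ) :
    HasDerivAt (fun s => ∫ x, G s x ∂μ) (∫ x, deriv (G · x) t ∂μ) t :=
  hasDerivAt_integral_of_continuous_of_isCompact hK hG.continuous
    hG.continuous_uncurry_deriv_left hGK
    (fun s x => (hasDerivAt_left_of_differentiable (hG.differentiable one_ne_zero) s x
      ).differentiableAt.hasDerivAt) t

theorem hasDerivAt_intervalIntegral_of_contDiff {G : ℝ → ℝ → E}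
    (hG : ContDiff ℝ 1 (uncurry G)) (a b t : ℝ) :
    HasDerivAt (fun s => ∫ x in a..b, G s x) (∫ x in a..b, deriv (G · x) t) t := by
  simp only [intervalIntegral.intervalIntegral_eq_integral_uIoc]
  refine (hasDerivAt_integral_of_contDiff hG (isCompact_uIcc (a := a) (b := b)) ?_ t).const_smul _
  filter_upwards [ae_restrict_mem measurableSet_uIoc] with x hx hxK
  exact absurd (uIoc_subset_uIcc hx) hxK

end ParametricIntegral

section VelocityMoments

variable {f : ℝ → ℝ → ℝ → ℝ} {K : Set ℝ}

theorem hasDerivAt_integral_mul_velocity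
    (hf : ContDiff ℝ 1 fun p : ℝ × ℝ × ℝ => f p.1 p.2.1 p.2.2)
    (hK : IsCompact K) (hsupp : ∀ t x, ∀ v ∉ K, f t x v = 0) (t x : ℝ) :
    HasDerivAt (fun y => ∫ v, v * f t y v) (∫ v, v * deriv (fun y => f t y v) x) x := by
  have hG : ContDiff ℝ 1 (uncurry fun y v => v * f t y v) :=
    contDiff_snd.mul (hf.comp (f := fun p : ℝ × ℝ => (t, p.1, p.2)) (by fun_prop))
  simpa only [deriv_const_mul_field'] using hasDerivAt_integral_of_contDiff (μ := volume) hG hK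
    (.of_forall fun v hv y => by simp [hsupp t y v hv]) x

theorem hasDerivAt_integral_of_vlasov
    (hf : ContDiff ℝ 1 fun p : ℝ × ℝ × ℝ => f p.1 p.2.1 p.2.2)
    (hK : IsCompact K) (hsupp : ∀ t x, ∀ v ∉ K, f t x v = 0) {E : ℝ → ℝ → ℝ}
    (hVlasov : ∀ t x v, deriv (fun s => f s x v) t + v * deriv (fun y => f t y v) x
        + E t x * deriv (fun w => f t x w) v = 0) (t x : ℝ) :
    HasDerivAt (fun s => ∫ v, f s x v) (-∫ v, v * deriv (fun y => f t y v) x) t := by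
  have hft : HasDerivAt (fun s => ∫ v, f s x v) (∫ v, deriv (fun s => f s x v) t) t :=
    hasDerivAt_integral_of_contDiff (μ := volume) (G := fun s v => f s x v)
      (hf.comp (f := fun p : ℝ × ℝ => (p.1, x, p.2)) (by fun_prop)) hK
      (.of_forall fun v hv s => hsupp s x v hv) t
  have hfv : ContDiff ℝ 1 (f t x) := hf.comp (f := fun v => (t, x, v)) (by fun_prop)
  have hfv_supp : HasCompactSupport (f t x) := .intro hK (hsupp t x)
  have hfv_int : ∫ v, deriv (f t x) v = 0 :=
    integral_eq_zero_of_hasDerivAt_of_integrable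
      (fun v => (hfv.differentiable one_ne_zero v).hasDerivAt)
      ((hfv.continuous_deriv le_rfl).integrable_of_hasCompactSupport hfv_supp.deriv)
      (hfv.continuous.integrable_of_hasCompactSupport hfv_supp)
  have hfx : Integrable fun v => v * deriv (fun y => f t y v) x := by
    have hcont : Continuous fun v => deriv (fun y => f t y v) x :=
      (ContDiff.continuous_uncurry_deriv_left (G := fun y v => f t y v)
        (hf.comp (f := fun p : ℝ × ℝ => (t, p.1, p.2)) (by fun_prop))).comp
        (Continuous.prodMk_right x)
    refine (continuous_id.mul hcont).integrable_of_hasCompactSupport (HasCompactSupport.mul_left ?_)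
    exact .intro hK fun v hv => by simp [hsupp t _ v hv]
  refine hft.congr_deriv ?_
  calc ∫ v, deriv (fun s => f s x v) t
      = ∫ v, (-(v * deriv (fun y => f t y v) x) - E t x * deriv (f t x) v) := by
        congr 1 with v
        linarith [hVlasov t x v]
    _ = -∫ v, v * deriv (fun y => f t y v) x := by
        rw [integral_sub hfx.fun_neg ((hfv.continuous_deriv le_rfl).integrable_of_hasCompactSupport
          hfv_supp.deriv |>.const_mul _), integral_neg, integral_const_mul, hfv_int, mul_zero,
          sub_zero]

end VelocityMoments

theorem intervalIntegral.integral_eq_mul_of_add_eq_const {φ ψ : ℝ → ℝ} {a b c : ℝ}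
    (hψ : IntervalIntegrable ψ volume a b) (hsum : ∀ x, φ x + ψ x = c)
    (hφ : ∫ x in a..b, φ x = 0) : ∫ x in a..b, ψ x = (b - a) * c := by
  have hφ_eq : φ = fun x => c - ψ x := funext fun x => eq_sub_of_add_eq (hsum x)
  rw [hφ_eq, intervalIntegral.integral_sub intervalIntegrable_const hψ,
    intervalIntegral.integral_const, smul_eq_mul] at hφ
  linarith

theorem field_derivative_along_characteristics_general
    (L T R : ℝ) (hL : 0 < L)
    (f : ℝ → ℝ → ℝ → ℝ) (E : ℝ → ℝ → ℝ)
    (hf : ContDiff ℝ 1 (fun p : ℝ × ℝ × ℝ => f p.1 p.2.1 p.2.2))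
    (hsupp : ∀ t x v, R < |v| → f t x v = 0)
    (hE : ContDiff ℝ 2 (fun p : ℝ × ℝ => E p.1 p.2))
    (hVlasov : ∀ t x v,
      deriv (fun s => f s x v) t + v * deriv (fun y => f t y v) x
        + E t x * deriv (fun w => f t x w) v = 0)
    (hPoisson : ∀ t x, deriv (fun y => E t y) x = (∫ v : ℝ, f t x v) - 1)
    (hmean : ∀ t, (∫ x in (0:ℝ)..L, E t x) = 0)
    (ρ J : ℝ → ℝ → ℝ) (Jbar : ℝ → ℝ)
    (hρ : ∀ t x, ρ t x = (∫ v : ℝ, f t x v) - 1)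
    (hJ : ∀ t x, J t x = ∫ v : ℝ, v * f t x v)
    (hJbar : ∀ t, Jbar t = (1 / L) * ∫ x in (0:ℝ)..L, J t x)
    (X V : ℝ → ℝ)
    (hX : ∀ t, HasDerivAt X (V t) t) :
    ∀ t ∈ Set.Ioo (0 : ℝ) T,
      deriv (fun s => E s (X s)) t = -J t (X t) + Jbar t + V t * ρ t (X t) := by
  intro t _
  have hsupp_ball : ∀ t x, ∀ v ∉ closedBall (0 : ℝ) R, f t x v = 0 :=
    fun t x v hv => hsupp t x v (by simpa using hv)
  have hJx : ∀ x, HasDerivAt (J t) (∫ v, v * deriv (fun y => f t y v) x) x := by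
    simpa only [← hJ] using
      hasDerivAt_integral_mul_velocity hf (isCompact_closedBall 0 R) hsupp_ball t
  have hEtx : ∀ x, HasDerivAt (fun y => deriv (E · y) t)
      (-∫ v, v * deriv (fun y => f t y v) x) x := fun x =>
    hE.hasDerivAt_deriv_left_of_hasDerivAt_deriv_right <| by
      simpa only [hPoisson] using (hasDerivAt_integral_of_vlasov hf (isCompact_closedBall 0 R)
        hsupp_ball hVlasov t x).sub_const 1
  have hconst : ∀ x, deriv (E · x) t + J t x = deriv (E · 0) t + J t 0 := fun x =>
    is_const_of_deriv_eq_zero (fun y => ((hEtx y).add (hJx y)).differentiableAt)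
      (fun y => by simpa using ((hEtx y).add (hJx y)).deriv) x 0
  have hEt_mean : ∫ x in (0 : ℝ)..L, deriv (E · x) t = 0 := by
    refine (hasDerivAt_intervalIntegral_of_contDiff (hE.of_le one_le_two) 0 L t).unique ?_
    simpa only [hmean] using hasDerivAt_const t (0 : ℝ)
  have hJ_int : IntervalIntegrable (J t) volume 0 L :=
    (Differentiable.continuous fun x => (hJx x).differentiableAt).intervalIntegrable 0 L
  have hJbar_eq : Jbar t = deriv (E · 0) t + J t 0 := by
    rw [hJbar, intervalIntegral.integral_eq_mul_of_add_eq_const hJ_int hconst hEt_mean, sub_zero]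
    field_simp
  rw [(hasDerivAt_uncurry_comp (hE.differentiable two_ne_zero) (hX t)).deriv, smul_eq_mul,
    hPoisson, ← hρ, hJbar_eq]
  linarith [hconst (X t)]

/-- First total time derivative of the field along a characteristic for the periodic
Vlasov–Poisson system: if `dX/dt = V`, `dV/dt = E(t,X)`, then
`d/dt [E(t,X(t))] = −J(t,X(t)) + J̄(t) + V(t) ρ(t,X(t))`. -/
theorem field_derivative_along_characteristics
    (L T R : ℝ) (hL : 0 < L) (hT : 0 < T) (hR : 0 < R)
    (f : ℝ → ℝ → ℝ → ℝ) (E : ℝ → ℝ → ℝ)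
    (hf : ContDiff ℝ 1 (fun p : ℝ × ℝ × ℝ => f p.1 p.2.1 p.2.2))
    (hper : ∀ t x v, f t (x + L) v = f t x v)
    (hsupp : ∀ t x v, R < |v| → f t x v = 0)
    (hE : ContDiff ℝ 2 (fun p : ℝ × ℝ => E p.1 p.2))
    (hEper : ∀ t x, E t (x + L) = E t x)
    (hVlasov : ∀ t x v,
      deriv (fun s => f s x v) t + v * deriv (fun y => f t y v) x
        + E t x * deriv (fun w => f t x w) v = 0)
    (hPoisson : ∀ t x, deriv (fun y => E t y) x = (∫ v : ℝ, f t x v) - 1)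
    (hmean : ∀ t, (∫ x in (0:ℝ)..L, E t x) = 0)
    (ρ J : ℝ → ℝ → ℝ) (Jbar : ℝ → ℝ)
    (hρ : ∀ t x, ρ t x = (∫ v : ℝ, f t x v) - 1)
    (hJ : ∀ t x, J t x = ∫ v : ℝ, v * f t x v)
    (hJbar : ∀ t, Jbar t = (1 / L) * ∫ x in (0:ℝ)..L, J t x)
    (X V : ℝ → ℝ)
    (hX : ∀ t, HasDerivAt X (V t) t)
    (hV : ∀ t, HasDerivAt V (E t (X t)) t) :
    ∀ t ∈ Set.Ioo (0 : ℝ) T,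
      deriv (fun s => E s (X s)) t = -J t (X t) + Jbar t + V t * ρ t (X t) :=
  field_derivative_along_characteristics_general L T R hL f E hf hsupp hE hVlasov hPoisson hmean ρ J
    Jbar hρ hJ hJbar X V hX
end

section
/- Let S(u) := max(0, 1 − |u|) be the linear B-spline, Δx, Δv > 0, R ∈ ℝ, and set x_i := i·Δx for i ∈ ℤ and v_j := −R + j·Δv for j ∈ ℤ. Let A be a finite index set, ω : A → ℝ weights, and (X_a, V_a) ∈ ℝ² points for a ∈ A. Define the deposited grid values f_{i,j} := Σ_{a∈A} ω_a · S((x_i − X_a)/Δx) · S((v_j − V_a)/Δv). Then Σ_{(i,j)∈ℤ²} v_j · f_{i,j} = Σ_{a∈A} ω_a · V_a. -/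
/-!
Deposition is linear in the particles, and the tensor-product weight of one particle factors into an
`x`-part and a `v`-part, so it suffices to treat a single particle and the two one-dimensional grids
separately. On the integer lattice the hat function `S(i - y)` is supported on `⌊y⌋, ⌊y⌋ + 1`,
where it takes the values `1 - fract y` and `fract y`; hence it sums to `1` against constants and to
`y` against the identity. Rescaling to a grid `o + j h` gives partition of unity in `x` and the
first-moment identity `Σ_j v_j S((v_j - V)/Δv) = V` in `v`.
-/

open Finset

/-- The linear B-spline `S` of the deposition scheme. -/
noncomputable def hat (u : ℝ) : ℝ := max 0 (1 - |u|)

lemma hat_of_abs_le_one {u : ℝ} (hu : |u| ≤ 1) : hat u = 1 - |u| :=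
  max_eq_right (by linarith)

lemma hat_eq_zero_of_one_le_abs {u : ℝ} (hu : 1 ≤ |u|) : hat u = 0 :=
  max_eq_left (by linarith)

lemma hat_int_sub_eq_zero (y : ℝ) {i : ℤ} (hi : i ∉ ({⌊y⌋, ⌊y⌋ + 1} : Finset ℤ)) :
    hat (i - y) = 0 := by
  simp only [mem_insert, mem_singleton, not_or] at hi
  apply hat_eq_zero_of_one_le_abs
  have hfloor := Int.floor_le y
  have hceil := Int.lt_floor_add_one y
  rcases lt_or_gt_of_ne hi.1 with hlt | hgt
  · have : (i : ℝ) ≤ ⌊y⌋ - 1 := by exact_mod_cast Int.le_sub_one_of_lt hlt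
    exact le_abs'.2 (Or.inl (by linarith))
  · have : (⌊y⌋ : ℝ) + 2 ≤ i := by exact_mod_cast (show ⌊y⌋ + 2 ≤ i by omega)
    exact le_abs'.2 (Or.inr (by linarith))

lemma hasSum_affine_mul_hat_int_sub (c d y : ℝ) :
    HasSum (fun i : ℤ => (c + d * i) * hat (i - y)) (c + d * y) := by
  have hsupp : ∀ i ∉ ({⌊y⌋, ⌊y⌋ + 1} : Finset ℤ), (c + d * i) * hat (i - y) = 0 :=
    fun i hi => by rw [hat_int_sub_eq_zero y hi, mul_zero]
  have hfract := Int.fract_nonneg y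
  have hfract' := Int.fract_lt_one y
  have hleft : hat (⌊y⌋ - y) = 1 - Int.fract y := by
    rw [hat_of_abs_le_one] <;> rw [abs_sub_comm, Int.self_sub_floor, abs_of_nonneg hfract]
    linarith
  have hright : hat ((⌊y⌋ + 1 : ℤ) - y) = Int.fract y := by
    have : ((⌊y⌋ + 1 : ℤ) : ℝ) - y = 1 - Int.fract y := by
      rw [← Int.self_sub_floor]; push_cast; ring
    rw [this, hat_of_abs_le_one] <;> rw [abs_of_nonneg (by linarith)] <;> linarith
  have hsum : ∑ i ∈ {⌊y⌋, ⌊y⌋ + 1}, (c + d * i) * hat (i - y) = c + d * y := by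
    rw [sum_pair (by omega), hleft, hright, ← Int.self_sub_floor]
    push_cast
    ring
  exact hsum ▸ hasSum_sum_of_ne_finset_zero hsupp

lemma hasSum_affine_mul_hat_grid {h : ℝ} (hh : h ≠ 0) (o c d y : ℝ) :
    HasSum (fun j : ℤ => (c + d * (o + j * h)) * hat ((o + j * h - y) / h)) (c + d * y) := by
  convert hasSum_affine_mul_hat_int_sub (c + d * o) (d * h) ((y - o) / h) using 1
  · ext j
    congr 1
    · ring
    · congr 1
      field_simp
      ring
  · field_simp
    ring

lemma hasSum_hat_grid {h : ℝ} (hh : h ≠ 0) (y : ℝ) :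
    HasSum (fun i : ℤ => hat ((i * h - y) / h)) 1 := by
  simpa using hasSum_affine_mul_hat_grid hh 0 1 0 y

lemma hasSum_grid_mul_hat_grid {h : ℝ} (hh : h ≠ 0) (o y : ℝ) :
    HasSum (fun j : ℤ => (o + j * h) * hat ((o + j * h - y) / h)) y := by
  simpa using hasSum_affine_mul_hat_grid hh o 0 1 y

lemma HasSum.mul_prod_real {α β : Type*} {f : α → ℝ} {g : β → ℝ} {a b : ℝ}
    (hf : HasSum f a) (hg : HasSum g b) :
    HasSum (fun p : α × β => f p.1 * g p.2) (a * b) :=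
  hf.mul hg (summable_mul_of_summable_norm hf.summable.abs hg.summable.abs)

/-- Exact momentum conservation of the linear-B-spline deposition step: weights
`ω_a` at points `(X_a, V_a)` deposited on the uniform grid `(iΔx, −R + jΔv)` with
`S(u) = max 0 (1 − |u|)` satisfy `Σ_{(i,j)∈ℤ²} v_j f_{i,j} = Σ_a ω_a V_a`. -/
theorem deposition_conserves_momentum {ι : Type*}
    (Δx Δv R : ℝ) (hΔx : 0 < Δx) (hΔv : 0 < Δv)
    (A : Finset ι) (ω X V : ι → ℝ) :
    ∑' p : ℤ × ℤ,
        ((-R + (p.2 : ℝ) * Δv) *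
          ∑ a ∈ A, ω a * max 0 (1 - |((p.1 : ℝ) * Δx - X a) / Δx|)
            * max 0 (1 - |((-R + (p.2 : ℝ) * Δv) - V a) / Δv|))
      = ∑ a ∈ A, ω a * V a := by
  have hparticle : ∀ a ∈ A, HasSum (fun p : ℤ × ℤ => ω a * (hat ((p.1 * Δx - X a) / Δx) *
      ((-R + p.2 * Δv) * hat ((-R + p.2 * Δv - V a) / Δv)))) (ω a * V a) := fun a _ => by
    simpa using ((hasSum_hat_grid hΔx.ne' (X a)).mul_prod_real
      (hasSum_grid_mul_hat_grid hΔv.ne' (-R) (V a))).mul_left (ω a)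
  refine ((hasSum_sum hparticle).congr_fun fun p => ?_).tsum_eq
  rw [mul_sum]
  refine sum_congr rfl fun a _ => ?_
  simp only [hat]
  ring
end

section
/- Let S(u) := max(0, 1 − |u|) be the linear B-spline, let N_x, N_v ≥ 1, Δx, Δv > 0, L := N_x·Δx, R ∈ ℝ, x_i := i·Δx for i ∈ {0,…,N_x−1}, v_l := −R + l·Δv for l ∈ {0,…,N_v−1}. Let ω : {0,…,N_x−1}×{0,…,N_v−1} → ℝ satisfy Δx·Δv·Σ_{k,l} ω_{k,l} = L. Define ρ_i := Δv·Σ_{k,l} ω_{k,l}·S((x_i − x_k)/Δx) − 1, J_i := Δv·Σ_{k,l} ω_{k,l}·v_l·S((x_i − x_k)/Δx), and J̄ := (Δx·Δv/L)·Σ_{k,l} ω_{k,l}·v_l. Then Σ_{i,j} ω_{i,j}·(v_j·ρ_i − J_i + J̄) = 0. -/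
/-!
At the grid nodes the spline `S((x_i - x_k)/Δx)` is the Kronecker delta `δ_{ik}`, so
`ρ_i = Δv A_i - 1` and `J_i = Δv B_i`, where `A_i = Σ_l ω_{i,l}` and `B_i = Σ_l ω_{i,l} v_l`.
The terms `Δv A_i B_i` then cancel and the sum collapses to `J̄ Σ A - Σ B`; the mass
normalization `Δx Δv Σ A = L` makes `J̄ Σ A = Σ B`.
-/

open Finset

theorem max_zero_one_sub_abs_intCast (m : ℤ) :
    max 0 (1 - |(m : ℝ)|) = if m = 0 then 1 else 0 := by
  split_ifs with hm
  · simp [hm]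
  · have : (1 : ℝ) ≤ |(m : ℝ)| := by exact_mod_cast Int.one_le_abs hm
    exact max_eq_left (by linarith)

theorem max_zero_one_sub_abs_grid {Δx : ℝ} (hΔx : Δx ≠ 0) (i k : ℕ) :
    max 0 (1 - |((i : ℝ) * Δx - (k : ℝ) * Δx) / Δx|) = if i = k then 1 else 0 := by
  have hcell : ((i : ℝ) * Δx - (k : ℝ) * Δx) / Δx = ((i - k : ℤ) : ℝ) := by
    push_cast; field_simp
  simp only [hcell, max_zero_one_sub_abs_intCast, sub_eq_zero, Nat.cast_inj]

theorem sum_sum_mul_max_zero_one_sub_abs_grid {κ : Type*} {Δx : ℝ} (hΔx : Δx ≠ 0)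
    {N i : ℕ} (hi : i ∈ range N) (t : Finset κ) (g : ℕ → κ → ℝ) :
    ∑ k ∈ range N, ∑ l ∈ t, g k l * max 0 (1 - |((i : ℝ) * Δx - (k : ℝ) * Δx) / Δx|)
      = ∑ l ∈ t, g i l := by
  simp only [max_zero_one_sub_abs_grid hΔx, mul_ite, mul_one, mul_zero, sum_ite_irrel,
    sum_const_zero]
  simp [eq_comm (a := i), hi]

theorem sum_sum_mul_momentum_defect {ι κ R : Type*} [CommRing R] (s : Finset ι) (t : Finset κ)
    (ω : ι → κ → R) (v : κ → R) (c Jbar : R) :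
    ∑ i ∈ s, ∑ j ∈ t, ω i j *
        (v j * (c * ∑ l ∈ t, ω i l - 1) - c * ∑ l ∈ t, ω i l * v l + Jbar)
      = Jbar * ∑ i ∈ s, ∑ j ∈ t, ω i j - ∑ i ∈ s, ∑ j ∈ t, ω i j * v j := by
  rw [mul_sum, ← sum_sub_distrib]
  refine sum_congr rfl fun i _ => ?_
  set A := ∑ l ∈ t, ω i l
  set B := ∑ l ∈ t, ω i l * v l
  calc ∑ j ∈ t, ω i j * (v j * (c * A - 1) - c * B + Jbar)
      = ∑ j ∈ t, ((c * A - 1) * (ω i j * v j) + (Jbar - c * B) * ω i j) :=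
        sum_congr rfl fun j _ => by ring
    _ = Jbar * A - B := by rw [sum_add_distrib, ← mul_sum, ← mul_sum]; ring

theorem ck2_momentum_cancellation_general
    (Nx Nv : ℕ) (hNx : 1 ≤ Nx)
    (Δx Δv R : ℝ) (hΔx : 0 < Δx)
    (ω : ℕ → ℕ → ℝ)
    (hmass : Δx * Δv * ∑ k ∈ Finset.range Nx, ∑ l ∈ Finset.range Nv, ω k l
      = (Nx : ℝ) * Δx)
    (ρ J : ℕ → ℝ) (Jbar : ℝ)
    (hρ : ∀ i, ρ i = Δv * (∑ k ∈ Finset.range Nx, ∑ l ∈ Finset.range Nv,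
        ω k l * max 0 (1 - |((i : ℝ) * Δx - (k : ℝ) * Δx) / Δx|)) - 1)
    (hJ : ∀ i, J i = Δv * ∑ k ∈ Finset.range Nx, ∑ l ∈ Finset.range Nv,
        ω k l * (-R + (l : ℝ) * Δv) * max 0 (1 - |((i : ℝ) * Δx - (k : ℝ) * Δx) / Δx|))
    (hJbar : Jbar = (Δx * Δv / ((Nx : ℝ) * Δx)) *
        ∑ k ∈ Finset.range Nx, ∑ l ∈ Finset.range Nv, ω k l * (-R + (l : ℝ) * Δv)) :
    ∑ i ∈ Finset.range Nx, ∑ j ∈ Finset.range Nv,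
      ω i j * ((-R + (j : ℝ) * Δv) * ρ i - J i + Jbar) = 0 := by
  have hL : (Nx : ℝ) * Δx ≠ 0 := by positivity
  calc _ = ∑ i ∈ range Nx, ∑ j ∈ range Nv, ω i j *
        ((-R + (j : ℝ) * Δv) * (Δv * ∑ l ∈ range Nv, ω i l - 1)
          - Δv * ∑ l ∈ range Nv, ω i l * (-R + (l : ℝ) * Δv) + Jbar) :=
        sum_congr rfl fun i hi => by
          rw [hρ, hJ, sum_sum_mul_max_zero_one_sub_abs_grid hΔx.ne' hi,
            sum_sum_mul_max_zero_one_sub_abs_grid hΔx.ne' hi]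
    _ = Jbar * ∑ i ∈ range Nx, ∑ j ∈ range Nv, ω i j
          - ∑ i ∈ range Nx, ∑ j ∈ range Nv, ω i j * (-R + (j : ℝ) * Δv) :=
        sum_sum_mul_momentum_defect _ _ _ _ _ _
    _ = 0 := by
        rw [hJbar, mul_right_comm, div_mul_eq_mul_div, hmass, div_self hL, one_mul, sub_self]

/-- Second-order term cancellation ensuring exact momentum conservation of the CK2
algorithm: with linear-B-spline discrete charge density `ρ_i`, current `J_i` and mean
current `J̄` computed from weights `ω` of total mass `L = N_x Δx`, one has
`Σ_{i,j} ω_{i,j} (v_j ρ_i − J_i + J̄) = 0`. -/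
theorem ck2_momentum_cancellation
    (Nx Nv : ℕ) (hNx : 1 ≤ Nx) (hNv : 1 ≤ Nv)
    (Δx Δv R : ℝ) (hΔx : 0 < Δx) (hΔv : 0 < Δv)
    (ω : ℕ → ℕ → ℝ)
    (hmass : Δx * Δv * ∑ k ∈ Finset.range Nx, ∑ l ∈ Finset.range Nv, ω k l
      = (Nx : ℝ) * Δx)
    (ρ J : ℕ → ℝ) (Jbar : ℝ)
    (hρ : ∀ i, ρ i = Δv * (∑ k ∈ Finset.range Nx, ∑ l ∈ Finset.range Nv,
        ω k l * max 0 (1 - |((i : ℝ) * Δx - (k : ℝ) * Δx) / Δx|)) - 1)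
    (hJ : ∀ i, J i = Δv * ∑ k ∈ Finset.range Nx, ∑ l ∈ Finset.range Nv,
        ω k l * (-R + (l : ℝ) * Δv) * max 0 (1 - |((i : ℝ) * Δx - (k : ℝ) * Δx) / Δx|))
    (hJbar : Jbar = (Δx * Δv / ((Nx : ℝ) * Δx)) *
        ∑ k ∈ Finset.range Nx, ∑ l ∈ Finset.range Nv, ω k l * (-R + (l : ℝ) * Δv)) :
    ∑ i ∈ Finset.range Nx, ∑ j ∈ Finset.range Nv,
      ω i j * ((-R + (j : ℝ) * Δv) * ρ i - J i + Jbar) = 0 :=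
  ck2_momentum_cancellation_general Nx Nv hNx Δx Δv R hΔx ω hmass ρ J Jbar hρ hJ hJbar
end

section
/- Let N ≥ 1, let W : ZMod N → ℝ be even (W(−d) = W(d) for all d), let B be a finite index set, ω : ZMod N × B → ℝ, v : B → ℝ, and α ∈ ℝ. Then Σ_{i ∈ ZMod N} Σ_{j ∈ B} Σ_{k ∈ ZMod N} Σ_{l ∈ B} ω(i,j)·ω(k,l)·(α + v_l² + 2·v_j·v_l + v_j²)·(W(i+1−k) − W(i−1−k)) = 0. -/
/-- Third-order term cancellation ensuring exact momentum conservation of the CK3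
algorithm: for an even `N`-periodic kernel `W`, weights `ω`, velocity values `v` and a
constant `α`, the centered-difference combination vanishes:
`Σ_{i,j,k,l} ω(i,j) ω(k,l) (α + v_l² + 2 v_j v_l + v_j²) (W(i+1−k) − W(i−1−k)) = 0`. -/
theorem ck3_momentum_cancellation
    (N : ℕ) [NeZero N] {ι : Type*}
    (W : ZMod N → ℝ) (hW : ∀ d, W (-d) = W d)
    (B : Finset ι) (ω : ZMod N → ι → ℝ) (v : ι → ℝ) (α : ℝ) :
    ∑ i : ZMod N, ∑ j ∈ B, ∑ k : ZMod N, ∑ l ∈ B,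
      ω i j * ω k l * (α + v l ^ 2 + 2 * v j * v l + v j ^ 2)
        * (W (i + 1 - k) - W (i - 1 - k)) = 0 := by
  set P : Finset (ZMod N × ι) := Finset.univ ×ˢ B with hP
  set G : (ZMod N × ι) → (ZMod N × ι) → ℝ := fun p q =>
    ω p.1 p.2 * ω q.1 q.2 * (α + v q.2 ^ 2 + 2 * v p.2 * v q.2 + v p.2 ^ 2)
      * (W (p.1 + 1 - q.1) - W (p.1 - 1 - q.1)) with hG
  have hW1 : ∀ a b : ZMod N, W (b + 1 - a) = W (a - 1 - b) := by
    intro a b; rw [← hW]; congr 1; ring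
  have hW2 : ∀ a b : ZMod N, W (b - 1 - a) = W (a + 1 - b) := by
    intro a b; rw [← hW]; congr 1; ring
  have hGswap : ∀ p q, G q p = -G p q := by
    intro p q
    simp only [hG]
    rw [hW1 p.1 q.1, hW2 p.1 q.1]
    ring
  have hS : (∑ i : ZMod N, ∑ j ∈ B, ∑ k : ZMod N, ∑ l ∈ B,
      ω i j * ω k l * (α + v l ^ 2 + 2 * v j * v l + v j ^ 2)
        * (W (i + 1 - k) - W (i - 1 - k)))
      = ∑ p ∈ P, ∑ q ∈ P, G p q := by
    simp only [hP, Finset.sum_product, hG]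
  rw [hS]
  have hneg : (∑ p ∈ P, ∑ q ∈ P, G p q) = -(∑ p ∈ P, ∑ q ∈ P, G p q) := by
    calc (∑ p ∈ P, ∑ q ∈ P, G p q) = ∑ q ∈ P, ∑ p ∈ P, G p q := Finset.sum_comm
    _ = ∑ q ∈ P, ∑ p ∈ P, -(G q p) := by
        refine Finset.sum_congr rfl fun q _ => Finset.sum_congr rfl fun p _ => ?_
        rw [hGswap]
    _ = -(∑ p ∈ P, ∑ q ∈ P, G p q) := by
        simp [Finset.sum_neg_distrib]
  linarith
end

section
/- Let S(u) := max(0, 1 − |u|) be the linear B-spline and h > 0. Then for all X, X' ∈ ℝ: Σ_{k∈ℤ} | S((k·h − X)/h) − S((k·h − X')/h) | ≤ 2·|X − X'|/h. -/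
/-!
After rescaling by `h` the nodes are the integers. For a position `y` in a cell `[m, m + 1]`
only the coefficients at `m` and `m + 1` are nonzero, and each is 1-Lipschitz in `y`, so a
move inside one cell changes the coefficient vector by at most `2|y - y'|` in `ℓ¹`. A longer
move is cut at the integers it crosses and the cellwise bounds add up by the triangle
inequality. The bound holds for every finite partial sum, hence for the series.
-/

open Finset

noncomputable def hatSpline (u : ℝ) : ℝ := max 0 (1 - |u|)

lemma hatSpline_eq_zero_of_one_le_abs {u : ℝ} (hu : 1 ≤ |u|) : hatSpline u = 0 :=
  max_eq_left (by linarith)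

lemma abs_hatSpline_sub_hatSpline_le (u v : ℝ) : |hatSpline u - hatSpline v| ≤ |u - v| :=
  calc |hatSpline u - hatSpline v| = |max (1 - |u|) 0 - max (1 - |v|) 0| := by
        simp only [hatSpline, max_comm]
    _ ≤ |(1 - |u|) - (1 - |v|)| := abs_max_sub_max_le_abs _ _ _
    _ ≤ |u - v| := by
        rw [sub_sub_sub_cancel_left, abs_sub_comm]; exact abs_abs_sub_abs_le_abs_sub u v

lemma hatSpline_intCast_sub_eq_zero {m k : ℤ} {y : ℝ} (hy : y ∈ Set.Icc (m : ℝ) (m + 1))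
    (hk : k ∉ ({m, m + 1} : Finset ℤ)) : hatSpline (k - y) = 0 := by
  apply hatSpline_eq_zero_of_one_le_abs
  obtain ⟨hmy, hym⟩ := hy
  rcases (by simp at hk; omega : k + 1 ≤ m ∨ m + 2 ≤ k) with hk | hk
  · have : (k : ℝ) + 1 ≤ m := by exact_mod_cast hk
    rw [abs_of_neg (by linarith)]; linarith
  · have : (m : ℝ) + 2 ≤ k := by exact_mod_cast hk
    rw [abs_of_pos (by linarith)]; linarith

lemma le_mul_sub_of_forall_unitCell {d : ℝ → ℝ → ℝ} {L : ℝ}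
    (triangle : ∀ x y z, d x z ≤ d x y + d y z)
    (cell : ∀ (m : ℤ) x y, (m : ℝ) ≤ x → x ≤ y → y ≤ m + 1 → d x y ≤ L * (y - x))
    {x y : ℝ} (hxy : x ≤ y) : d x y ≤ L * (y - x) := by
  suffices key : ∀ n : ℕ, ∀ x y, x ≤ y → ⌊y⌋ = ⌊x⌋ + n → d x y ≤ L * (y - x) from
    key (⌊y⌋ - ⌊x⌋).toNat x y hxy (by have := Int.floor_mono hxy; omega)
  intro n
  induction n with
  | zero =>
    intro x y hxy hfloor
    exact cell ⌊x⌋ x y (Int.floor_le x) hxy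
      (by have := Int.lt_floor_add_one y; rw [hfloor] at this; push_cast at this; linarith)
  | succ n ih =>
    intro x y hxy hfloor
    set z : ℝ := ⌊x⌋ + 1
    have hz : ⌊z⌋ = ⌊x⌋ + 1 := by simp [z]
    have hzy : z ≤ y := by
      have := Int.floor_le y; rw [hfloor] at this; push_cast at this; linarith
    calc d x y ≤ d x z + d z y := triangle x z y
      _ ≤ L * (z - x) + L * (y - z) := by
          gcongr
          · exact cell ⌊x⌋ x z (Int.floor_le x) (Int.lt_floor_add_one x).le le_rfl
          · exact ih z y hzy (by rw [hz, hfloor]; push_cast; ring)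
      _ = L * (y - x) := by ring

lemma sum_abs_hatSpline_sub_le_of_mem_Icc (F : Finset ℤ) {m : ℤ} {y y' : ℝ}
    (hy : y ∈ Set.Icc (m : ℝ) (m + 1)) (hy' : y' ∈ Set.Icc (m : ℝ) (m + 1)) :
    ∑ k ∈ F, |hatSpline (k - y) - hatSpline (k - y')| ≤ 2 * |y - y'| := by
  classical
  set f : ℤ → ℝ := fun k => |hatSpline (k - y) - hatSpline (k - y')|
  have hsupp : ∀ k ∈ F, f k ≠ 0 → k ∈ ({m, m + 1} : Finset ℤ) := fun k _ hk => by
    by_contra hk'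
    simp [f, hatSpline_intCast_sub_eq_zero hy hk', hatSpline_intCast_sub_eq_zero hy' hk'] at hk
  have hlip : ∀ k : ℤ, f k ≤ |y - y'| := fun k => by
    simpa [f, abs_sub_comm y y'] using abs_hatSpline_sub_hatSpline_le (k - y) (k - y')
  calc ∑ k ∈ F, f k = ∑ k ∈ F with k ∈ ({m, m + 1} : Finset ℤ), f k :=
        (sum_filter_of_ne hsupp).symm
    _ ≤ ∑ k ∈ ({m, m + 1} : Finset ℤ), f k :=
        sum_le_sum_of_subset_of_nonneg (fun k hk => (mem_filter.1 hk).2) fun k _ _ => abs_nonneg _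
    _ ≤ 2 * |y - y'| := by
        rw [sum_pair (by omega)]; linarith [hlip m, hlip (m + 1)]

lemma sum_abs_hatSpline_sub_le (F : Finset ℤ) (y y' : ℝ) :
    ∑ k ∈ F, |hatSpline (k - y) - hatSpline (k - y')| ≤ 2 * |y - y'| := by
  wlog hle : y ≤ y' generalizing y y'
  · simpa only [abs_sub_comm] using this y' y (le_of_not_ge hle)
  rw [abs_sub_comm, abs_of_nonneg (sub_nonneg.2 hle)]
  refine le_mul_sub_of_forall_unitCell
    (d := fun a b => ∑ k ∈ F, |hatSpline (k - a) - hatSpline (k - b)|)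
    (fun a b c => ?_) (fun m a b hma hab hbm => ?_) hle
  · rw [← sum_add_distrib]
    exact sum_le_sum fun k _ => abs_sub_le _ _ _
  · have := sum_abs_hatSpline_sub_le_of_mem_Icc F (m := m)
      ⟨hma, hab.trans hbm⟩ ⟨hma.trans hab, hbm⟩
    rwa [abs_sub_comm, abs_of_nonneg (sub_nonneg.2 hab)] at this

/-- ℓ¹ Lipschitz estimate for the linear-B-spline deposition coefficients: for nodes
`kh`, `k ∈ ℤ`, of a uniform grid of step `h`,
`Σ_k |S((kh − X)/h) − S((kh − X')/h)| ≤ 2|X − X'|/h`. -/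
theorem spline_deposition_l1_lipschitz
    (h : ℝ) (hh : 0 < h) (X X' : ℝ) :
    ∑' k : ℤ, |max 0 (1 - |((k : ℝ) * h - X) / h|) - max 0 (1 - |((k : ℝ) * h - X') / h|)|
      ≤ 2 * |X - X'| / h := by
  have hscale : ∀ (Z : ℝ) (k : ℤ), ((k : ℝ) * h - Z) / h = k - Z / h := fun Z k => by
    field_simp
  simp only [hscale]
  change ∑' k : ℤ, |hatSpline (k - X / h) - hatSpline (k - X' / h)| ≤ _
  refine tsum_le_of_sum_le' (by positivity) fun F => ?_
  calc _ ≤ 2 * |X / h - X' / h| := sum_abs_hatSpline_sub_le F _ _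
    _ = 2 * |X - X'| / h := by rw [← sub_div, abs_div, abs_of_pos hh, mul_div_assoc]
end
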